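/- arXiv:math/0606559 — 3 statements merged into one kernel-verified Lean document; each statement's English description precedes it below -/
import Mathlib

section
/- Let G be a discrete group acting continuously on a Hausdorff space X. Then the action is proper (i.e., the map G × X → X × X, (g,x) ↦ (gx, x) is proper) if and only if for every pair of points a, b ∈ X there exist open neighborhoods V_a of a and V_b of b such that the set {g ∈ G | gV_a ∩ V_b ≠ ∅} is finite. -/
/-!
For a proper action, the elements `g` with `g • a = b` form a compact, hence finite, subset of the
discrete group `G`; the image of the closed set `{g | g • a ≠ b} × X` under `(g, x) ↦ (g • x, x)`
is closed and misses `(b, a)`, so a box `Vb × Va` around `(b, a)` avoids it, and only the finitely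
many `g` with `g • a = b` can move `Va` into `Vb`. Conversely, an ultrafilter on `G × X` whose
image converges to `(b, a)` eventually has its first coordinate in the finite set of `g` moving
`Va` into `Vb`, so that coordinate is eventually constant.
-/

open Set Filter Topology
open scoped Pointwise

section

variable {G X : Type*} [Group G] [TopologicalSpace G] [TopologicalSpace X] [MulAction G X]

theorem ProperSMul.finite_setOf_smul_eq [DiscreteTopology G] [ProperSMul G X] (a b : X) :
    {g : G | g • a = b}.Finite := by
  have hfiber := (ProperSMul.isProperMap_smul_pair (G := G)).isCompact_preimage
    (isCompact_singleton (x := (b, a)))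
  refine (hfiber.image continuous_fst).finite_of_discrete.subset fun g hg => ?_
  exact ⟨(g, a), by simp [show g • a = b from hg], rfl⟩

theorem ProperSMul.exists_open_finite_setOf_smul_inter_nonempty [DiscreteTopology G]
    [ProperSMul G X] (a b : X) :
    ∃ Va Vb : Set X, IsOpen Va ∧ IsOpen Vb ∧ a ∈ Va ∧ b ∈ Vb ∧
      {g : G | (g • Va ∩ Vb).Nonempty}.Finite := by
  set F := {g : G | g • a = b}
  have hclosed : IsClosed ((fun gx : G × X ↦ (gx.1 • gx.2, gx.2)) '' (Fᶜ ×ˢ univ)) :=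
    ProperSMul.isProperMap_smul_pair.isClosedMap _ ((isClosed_discrete _).prod isClosed_univ)
  have hba : (b, a) ∉ (fun gx : G × X ↦ (gx.1 • gx.2, gx.2)) '' (Fᶜ ×ˢ univ) := by
    rintro ⟨⟨g, x⟩, ⟨hg, -⟩, hgx⟩
    simp only [Prod.mk.injEq] at hgx
    exact hg (hgx.2 ▸ hgx.1)
  obtain ⟨Vb, Va, hVb, hVa, hb, ha, hbox⟩ := isOpen_prod_iff.mp hclosed.isOpen_compl b a hba
  refine ⟨Va, Vb, hVa, hVb, ha, hb, (ProperSMul.finite_setOf_smul_eq a b).subset ?_⟩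
  rintro g ⟨_, ⟨x, hx, rfl⟩, hgx⟩
  by_contra hg
  exact hbox (mk_mem_prod hgx hx) ⟨(g, x), ⟨hg, trivial⟩, rfl⟩

theorem properSMul_of_forall_exists_open_finite_setOf_smul_inter_nonempty
    [ContinuousSMul G X] [T2Space X]
    (h : ∀ a b : X, ∃ Va Vb : Set X, IsOpen Va ∧ IsOpen Vb ∧ a ∈ Va ∧ b ∈ Vb ∧
      {g : G | (g • Va ∩ Vb).Nonempty}.Finite) :
    ProperSMul G X := by
  refine properSMul_iff_continuousSMul_ultrafilter_tendsto_t2.mpr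
    ⟨inferInstance, fun 𝒰 b a h𝒰 => ?_⟩
  obtain ⟨Va, Vb, hVa, hVb, ha, hb, hfin⟩ := h a b
  have hmem : {g : G | (g • Va ∩ Vb).Nonempty} ∈ 𝒰.map Prod.fst :=
    Ultrafilter.mem_map.mpr <| mem_of_superset
      (h𝒰 (prod_mem_nhds (hVb.mem_nhds hb) (hVa.mem_nhds ha)))
      fun gx hgx => ⟨gx.1 • gx.2, smul_mem_smul_set hgx.2, hgx.1⟩
  obtain ⟨g, -, hg⟩ := Ultrafilter.eq_pure_of_finite_mem hfin hmem
  exact ⟨g, (congrArg Ultrafilter.toFilter hg).le.trans (pure_le_nhds g)⟩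

end

/-- Let `G` be a discrete group acting continuously on a Hausdorff space `X`.
The action is proper (the map `G × X → X × X`, `(g,x) ↦ (g • x, x)` is a proper map) iff
every pair of points `a b : X` has open neighborhoods `Vа`, `Vb` such that
`{g : G | g • Va ∩ Vb ≠ ∅}` is finite. -/
theorem stmt0 {G X : Type*} [Group G] [TopologicalSpace G] [DiscreteTopology G]
    [TopologicalSpace X] [T2Space X] [MulAction G X] [ContinuousSMul G X] :
    IsProperMap (fun p : G × X => (p.1 • p.2, p.2)) ↔
      ∀ a b : X, ∃ Va Vb : Set X, IsOpen Va ∧ IsOpen Vb ∧ a ∈ Va ∧ b ∈ Vb ∧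
        {g : G | ((g • ·) '' Va) ∩ Vb ≠ ∅}.Finite := by
  simp_rw [← properSMul_iff, image_smul, ← nonempty_iff_ne_empty]
  exact ⟨fun _ => ProperSMul.exists_open_finite_setOf_smul_inter_nonempty,
    properSMul_of_forall_exists_open_finite_setOf_smul_inter_nonempty⟩
end

section
/- Let α : H → G be a group homomorphism between discrete groups, let S be a space with a proper H-action (on a Hausdorff space), and suppose ker(α) acts freely on S. Then the induced G-action on G ×_α S := (G × S)/(gα(h), s) ∼ (g, hs), given by g'·[g,s] = [g'g, s], is proper. Concretely: for all [g,x], [g',x'] ∈ G ×_α S there are open neighborhoods W, W' such that {g̃ ∈ G | g̃W ∩ W' ≠ ∅} is finite. -/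
/-- The setoid on `G × S` whose quotient is the induced space `G ×_α S`: we identify
`(g * α h, s) ∼ (g, h • s)` for `h : H`. -/
def indSetoid {H G : Type*} [Group H] [Group G] (α : H →* G) (S : Type*) [MulAction H S] :
    Setoid (G × S) where
  r p q := ∃ h : H, q.1 = p.1 * α h ∧ p.2 = h • q.2
  iseqv := by
    refine ⟨fun p => ⟨1, by simp⟩, ?_, ?_⟩
    · rintro p q ⟨h, h1, h2⟩
      exact ⟨h⁻¹, by rw [h1, map_inv, mul_inv_cancel_right], by rw [h2, inv_smul_smul]⟩
    · rintro p q r ⟨h, h1, h2⟩ ⟨h', h1', h2'⟩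
      exact ⟨h * h', by rw [h1', h1, map_mul, mul_assoc], by rw [h2, h2', mul_smul]⟩

/-- `G ×_α S`, the induction of the `H`-set `S` along `α : H → G`. -/
def Ind {H G : Type*} [Group H] [Group G] (α : H →* G) (S : Type*) [MulAction H S] : Type _ :=
  Quotient (indSetoid α S)

/-- The class `[g, s]` of `(g, s)` in `G ×_α S`. -/
def indMk {H G : Type*} [Group H] [Group G] (α : H →* G) {S : Type*} [MulAction H S]
    (p : G × S) : Ind α S :=
  Quotient.mk (indSetoid α S) p

/-- The `G`-action on `G ×_α S`, `g' • [g, s] = [g' * g, s]`. -/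
instance indMulAction {H G : Type*} [Group H] [Group G] (α : H →* G) (S : Type*)
    [MulAction H S] : MulAction G (Ind α S) where
  smul g' := Quotient.map (fun p => (g' * p.1, p.2))
    (by rintro p q ⟨h, h1, h2⟩; exact ⟨h, by simp only []; rw [h1, mul_assoc], h2⟩)
  one_smul := by
    rintro ⟨p⟩
    show Quotient.map _ _ (Quotient.mk (indSetoid α S) p) = Quotient.mk (indSetoid α S) p
    rw [Quotient.map_mk]
    simp
  mul_smul := by
    rintro g₁ g₂ ⟨p⟩
    show Quotient.map _ _ (Quotient.mk (indSetoid α S) p) =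
      Quotient.map _ _ (Quotient.map _ _ (Quotient.mk (indSetoid α S) p))
    rw [Quotient.map_mk, Quotient.map_mk, Quotient.map_mk]
    simp [mul_assoc]

theorem indSmul_mk {H G : Type*} [Group H] [Group G] (α : H →* G) {S : Type*} [MulAction H S]
    (g' : G) (p : G × S) : g' • indMk α p = indMk α (g' * p.1, p.2) := rfl

/-- The quotient topology on `G ×_α S`. -/
instance indTopologicalSpace {H G : Type*} [Group H] [Group G] (α : H →* G) (S : Type*)
    [MulAction H S] [TopologicalSpace G] [TopologicalSpace S] : TopologicalSpace (Ind α S) :=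
  inferInstanceAs (TopologicalSpace (Quotient (indSetoid α S)))

/-!
The preimage in `G × S` of the image `[g, V]` of `{g} × V` is `⋃ h, {g α(h)} × h⁻¹V`, which is
open when `V` is, since `G` is discrete and each `h` acts by a homeomorphism. If `g₀ [g, V]` meets
`[g', V']` then `g₀ = g' α(k) g⁻¹` for some `k` with `kV ∩ V' ≠ ∅`, so properness of the
`H`-action leaves only finitely many `g₀`.
-/

open Pointwise

section IndSlice

variable {H G : Type*} [Group H] [Group G] (α : H →* G) {S : Type*} [MulAction H S]

theorem indMk_eq_indMk_iff {p q : G × S} :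
    indMk α p = indMk α q ↔ ∃ h : H, q.1 = p.1 * α h ∧ p.2 = h • q.2 :=
  Quotient.eq

def indSlice (g : G) (V : Set S) : Set (Ind α S) :=
  indMk α '' ({g} ×ˢ V)

theorem mk_mem_indSlice {g : G} {V : Set S} {x : S} (hx : x ∈ V) :
    indMk α (g, x) ∈ indSlice α g V :=
  ⟨(g, x), ⟨rfl, hx⟩, rfl⟩

theorem smul_indSlice (g₀ g : G) (V : Set S) :
    g₀ • indSlice α g V = indSlice α (g₀ * g) V := by
  ext z
  simp only [indSlice, ← Set.image_smul, Set.image_image, Set.mem_image, Set.mem_prod,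
    Set.mem_singleton_iff, Prod.exists, indSmul_mk]
  constructor
  · rintro ⟨_, v, ⟨rfl, hv⟩, rfl⟩
    exact ⟨_, v, ⟨rfl, hv⟩, rfl⟩
  · rintro ⟨_, v, ⟨rfl, hv⟩, rfl⟩
    exact ⟨g, v, ⟨rfl, hv⟩, rfl⟩

theorem preimage_indSlice (g : G) (V : Set S) :
    indMk α ⁻¹' indSlice α g V = ⋃ h : H, {g * α h} ×ˢ (h⁻¹ • V) := by
  ext ⟨a, s⟩
  simp only [indSlice, Set.mem_preimage, Set.mem_image, Set.mem_iUnion, Set.mem_prod,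
    Set.mem_singleton_iff, Set.mem_inv_smul_set_iff, Prod.exists]
  constructor
  · rintro ⟨_, v, ⟨rfl, hv⟩, he⟩
    obtain ⟨h, ha, rfl⟩ := (indMk_eq_indMk_iff α).1 he
    exact ⟨h, ha, hv⟩
  · rintro ⟨h, rfl, hs⟩
    exact ⟨g, h • s, ⟨rfl, hs⟩, (indMk_eq_indMk_iff α).2 ⟨h, rfl, rfl⟩⟩

theorem isOpen_indSlice [TopologicalSpace G] [DiscreteTopology G] [TopologicalSpace S]
    [ContinuousConstSMul H S] (g : G) {V : Set S} (hV : IsOpen V) :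
    IsOpen (indSlice α g V) := by
  change IsOpen (indMk α ⁻¹' indSlice α g V)
  rw [preimage_indSlice]
  exact isOpen_iUnion fun h => (isOpen_discrete _).prod (hV.smul h⁻¹)

theorem exists_of_indSlice_inter_nonempty {g g' : G} {V V' : Set S}
    (hmeet : (indSlice α g V ∩ indSlice α g' V').Nonempty) :
    ∃ k : H, (k • V ∩ V').Nonempty ∧ g = g' * α k := by
  obtain ⟨_, ⟨⟨_, v⟩, ⟨rfl, hv⟩, he⟩, ⟨⟨_, v'⟩, ⟨rfl, hv'⟩, he'⟩⟩ := hmeet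
  obtain ⟨h, hg, rfl⟩ := (indMk_eq_indMk_iff α).1 (he.trans he'.symm)
  refine ⟨h⁻¹, ⟨v', Set.mem_inv_smul_set_iff.2 hv, hv'⟩, ?_⟩
  rw [hg, map_inv, mul_inv_cancel_right]

end IndSlice

theorem stmt7_general {H G : Type*} [Group H] [Group G]
    [TopologicalSpace G] [DiscreteTopology G]
    (α : H →* G) {S : Type*} [TopologicalSpace S] [MulAction H S]
    (hcont : ∀ h : H, Continuous fun s : S => h • s)
    (hproper : ∀ x x' : S, ∃ V V' : Set S, IsOpen V ∧ IsOpen V' ∧ x ∈ V ∧ x' ∈ V' ∧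
      {h : H | ((h • ·) '' V) ∩ V' ≠ ∅}.Finite) :
    ∀ z z' : Ind α S, ∃ W W' : Set (Ind α S), IsOpen W ∧ IsOpen W' ∧ z ∈ W ∧ z' ∈ W' ∧
      {g' : G | ((g' • ·) '' W) ∩ W' ≠ ∅}.Finite := by
  have : ContinuousConstSMul H S := ⟨hcont⟩
  rintro ⟨g, x⟩ ⟨g', x'⟩
  obtain ⟨V, V', hV, hV', hxV, hx'V', hfin⟩ := hproper x x'
  refine ⟨indSlice α g V, indSlice α g' V', isOpen_indSlice α g hV, isOpen_indSlice α g' hV',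
    mk_mem_indSlice α hxV, mk_mem_indSlice α hx'V', ?_⟩
  refine (hfin.image fun k => g' * α k * g⁻¹).subset fun g₀ hg₀ => ?_
  have hmeet : (indSlice α (g₀ * g) V ∩ indSlice α g' V').Nonempty := by
    rw [← smul_indSlice, ← Set.image_smul]
    exact Set.nonempty_iff_ne_empty.2 hg₀
  obtain ⟨k, hk, hg₀g⟩ := exists_of_indSlice_inter_nonempty α hmeet
  refine ⟨k, ?_, (eq_mul_inv_of_mul_eq hg₀g).symm⟩
  change _ ≠ ∅
  rw [Set.image_smul]
  exact hk.ne_empty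

/-- Let `α : H → G` be a homomorphism of discrete groups, let `S` be a
Hausdorff space with a proper `H`-action (properness in the form: every pair of points has
open neighborhoods `V, V'` with `{h | hV ∩ V' ≠ ∅}` finite), and suppose `ker α` acts freely
on `S`.  Then the induced `G`-action on `G ×_α S` (with the quotient topology), given by
`g' • [g, s] = [g' g, s]`, is proper: every pair of points of `G ×_α S` has open
neighborhoods `W, W'` such that `{g̃ : G | g̃ W ∩ W' ≠ ∅}` is finite. -/
theorem stmt7 {H G : Type*} [Group H] [Group G]
    [TopologicalSpace H] [DiscreteTopology H] [TopologicalSpace G] [DiscreteTopology G]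
    (α : H →* G) {S : Type*} [TopologicalSpace S] [T2Space S] [MulAction H S]
    (hcont : ∀ h : H, Continuous fun s : S => h • s)
    (hproper : ∀ x x' : S, ∃ V V' : Set S, IsOpen V ∧ IsOpen V' ∧ x ∈ V ∧ x' ∈ V' ∧
      {h : H | ((h • ·) '' V) ∩ V' ≠ ∅}.Finite)
    (hkerfree : ∀ (h : H) (s : S), α h = 1 → h • s = s → h = 1) :
    ∀ z z' : Ind α S, ∃ W W' : Set (Ind α S), IsOpen W ∧ IsOpen W' ∧ z ∈ W ∧ z' ∈ W' ∧
      {g' : G | ((g' • ·) '' W) ∩ W' ≠ ∅}.Finite :=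
  stmt7_general α hcont hproper
end

section
/- Let α : H → G be a group homomorphism, X an H-set, S' a G-set, and f' : S' → G ×_α X a G-equivariant map. Let W := f'⁻¹(α(H) ×_α X) and W̃ := {(w,x) ∈ W × X | f'(w) = [1,x]}. Then the map G ×_α W̃ → S', [g,(w,x)] ↦ g·w, is a well-defined G-equivariant bijection with inverse φ : S' → G ×_α W̃ given by φ(s') = [g, (g⁻¹s', x)] whenever f'(s') = [g,x]. -/
/-- For `T` a set of pairs in `S' × X`, where `G` acts on `S'` and `H` acts on `X`, the
setoid on `G × T` presenting `G ×_α T` for the `H`-action `h • (w, x) = (α h • w, h • x)`. -/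
def twSetoid {H G : Type*} [Group H] [Group G] (α : H →* G) {S' X : Type*} [MulAction G S']
    [MulAction H X] (T : Set (S' × X)) : Setoid (G × ↥T) where
  r p q := ∃ h : H, q.1 = p.1 * α h ∧
    (p.2 : S' × X) = (α h • (q.2 : S' × X).1, h • (q.2 : S' × X).2)
  iseqv := by
    refine ⟨fun p => ⟨1, by simp⟩, ?_, ?_⟩
    · rintro p q ⟨h, h1, h2⟩
      refine ⟨h⁻¹, by rw [h1, map_inv, mul_inv_cancel_right], ?_⟩
      rw [h2]
      simp
    · rintro p q r ⟨h, h1, h2⟩ ⟨h', h1', h2'⟩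
      refine ⟨h * h', by rw [h1', h1, map_mul, mul_assoc], ?_⟩
      rw [h2, h2']
      simp [mul_smul]

/-!
A class `[g, (w, x)]` is sent to `g • w`; this respects the relation because the twisted
`H`-action moves `w` by `α h`.  Since `f' w = [1, x]` for `(w, x) ∈ W̃`, equivariance gives
`f' (g • w) = [g, x]`, so `f'` recovers the class `[g, x]` from `g • w`, and then `w` itself by
cancelling `g`: this is injectivity.  Conversely `f' s' = [g, x]` forces `f' (g⁻¹ • s') = [1, x]`,
so `(g⁻¹ • s', x) ∈ W̃` and `[g, (g⁻¹ • s', x)]` is a preimage of `s'`.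
-/

section TwistedInduction

variable {H G : Type*} [Group H] [Group G] {α : H →* G} {X S' : Type*}
  [MulAction H X] [MulAction G S']

theorem map_smul_eq_indMk {f : S' → Ind α X} (hf : ∀ (g : G) (s : S'), f (g • s) = g • f s)
    {s : S'} {g : G} {x : X} (h : f s = indMk α (g, x)) (g₀ : G) :
    f (g₀ • s) = indMk α (g₀ * g, x) := by
  rw [hf, h, indSmul_mk]

variable (α) in
def twLift (T : Set (S' × X)) : Quotient (twSetoid α T) → S' :=
  Quotient.lift (fun p : G × T => p.1 • (p.2 : S' × X).1) <| by
    rintro p q ⟨h, hg, hp⟩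
    simp only [hp, hg, mul_smul]

variable {T : Set (S' × X)}

theorem twLift_mk (g : G) (p : T) :
    twLift α T (Quotient.mk _ (g, p)) = g • (p : S' × X).1 := rfl

theorem twLift_mul_mk (g₀ g : G) (p : T) :
    twLift α T (Quotient.mk _ (g₀ * g, p)) = g₀ • twLift α T (Quotient.mk _ (g, p)) :=
  mul_smul g₀ g _

theorem twLift_injective {f : S' → Ind α X} (hf : ∀ (g : G) (s : S'), f (g • s) = g • f s)
    (hT : ∀ p ∈ T, f p.1 = indMk α (1, p.2)) : Function.Injective (twLift α T) := by
  rintro ⟨g, p⟩ ⟨g', p'⟩ heq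
  change g • (p : S' × X).1 = g' • (p' : S' × X).1 at heq
  have hf_p : f (g • (p : S' × X).1) = indMk α (g, (p : S' × X).2) := by
    simpa using map_smul_eq_indMk hf (hT p p.2) g
  have hf_p' : f (g' • (p' : S' × X).1) = indMk α (g', (p' : S' × X).2) := by
    simpa using map_smul_eq_indMk hf (hT p' p'.2) g'
  obtain ⟨h, hg, hx⟩ := Quotient.exact (hf_p.symm.trans (heq ▸ hf_p'))
  have hw : (p : S' × X).1 = α h • (p' : S' × X).1 := by
    apply smul_left_cancel g
    rw [← mul_smul, ← hg, heq]
  exact Quotient.sound ⟨h, hg, Prod.ext hw hx⟩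

theorem twLift_surjective {f : S' → Ind α X}
    (hT : ∀ (s : S') (g : G) (x : X), f s = indMk α (g, x) → (g⁻¹ • s, x) ∈ T) :
    Function.Surjective (twLift α T) := by
  intro s
  obtain ⟨⟨g, x⟩, hgx⟩ := Quotient.exists_rep (f s)
  exact ⟨Quotient.mk _ (g, ⟨_, hT s g x hgx.symm⟩), smul_inv_smul g s⟩

end TwistedInduction

theorem stmt13_general {H G : Type*} [Group H] [Group G] (α : H →* G) {X S' : Type*}
    [MulAction H X] [MulAction G S']
    (f' : S' → Ind α X) (hf' : ∀ (g : G) (s' : S'), f' (g • s') = g • f' s')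
    (W : Set S')
    (hW : W = {s' | ∃ (g : G) (x : X), g ∈ α.range ∧ f' s' = indMk α (g, x)})
    (Wt : Set (S' × X))
    (hWt : Wt = {p | p.1 ∈ W ∧ f' p.1 = indMk α ((1 : G), p.2)}) :
    ∃ e : Quotient (twSetoid α Wt) ≃ S',
      (∀ (g : G) (p : ↥Wt),
        e (Quotient.mk (twSetoid α Wt) (g, p)) = g • (p : S' × X).1) ∧
      (∀ (g₀ g : G) (p : ↥Wt),
        e (Quotient.mk (twSetoid α Wt) (g₀ * g, p)) =
          g₀ • e (Quotient.mk (twSetoid α Wt) (g, p))) ∧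
      (∀ (s' : S') (g : G) (x : X), f' s' = indMk α (g, x) →
        ∃ p : ↥Wt, (p : S' × X) = (g⁻¹ • s', x) ∧
          e.symm s' = Quotient.mk (twSetoid α Wt) (g, p)) := by
  have hmem : ∀ (s' : S') (g : G) (x : X), f' s' = indMk α (g, x) → (g⁻¹ • s', x) ∈ Wt := by
    intro s' g x h
    have h₁ : f' (g⁻¹ • s') = indMk α (1, x) := by
      simpa using map_smul_eq_indMk hf' h g⁻¹
    rw [hWt, hW]
    exact ⟨⟨1, x, one_mem _, h₁⟩, h₁⟩
  let e := Equiv.ofBijective (twLift α Wt)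
    ⟨twLift_injective hf' fun _ hp => (hWt ▸ hp).2, twLift_surjective hmem⟩
  refine ⟨e, twLift_mk (α := α), twLift_mul_mk (α := α), fun s' g x h => ⟨⟨_, hmem s' g x h⟩, rfl, ?_⟩⟩
  rw [Equiv.symm_apply_eq]
  exact (smul_inv_smul g s').symm

/-- Let `α : H → G` be a group homomorphism with `ker α` acting freely on
the `H`-set `X`, let `S'` be a `G`-set and `f' : S' → G ×_α X` a `G`-equivariant map.  Let
`W = f'⁻¹(α(H) ×_α X)` and `W̃ = {(w, x) ∈ W × X | f'(w) = [1, x]}`, with `H` acting on `W̃`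
by `h • (w, x) = (α h • w, h • x)`.  Then the map `G ×_α W̃ → S'`, `[g, (w, x)] ↦ g • w`, is
a well-defined `G`-equivariant bijection, whose inverse `φ` satisfies
`φ(s') = [g, (g⁻¹ • s', x)]` whenever `f'(s') = [g, x]`. -/
theorem stmt13 {H G : Type*} [Group H] [Group G] (α : H →* G) {X S' : Type*}
    [MulAction H X] [MulAction G S']
    (hkerfree : ∀ (h : H) (x : X), α h = 1 → h • x = x → h = 1)
    (f' : S' → Ind α X) (hf' : ∀ (g : G) (s' : S'), f' (g • s') = g • f' s')
    (W : Set S')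
    (hW : W = {s' | ∃ (g : G) (x : X), g ∈ α.range ∧ f' s' = indMk α (g, x)})
    (Wt : Set (S' × X))
    (hWt : Wt = {p | p.1 ∈ W ∧ f' p.1 = indMk α ((1 : G), p.2)}) :
    ∃ e : Quotient (twSetoid α Wt) ≃ S',
      (∀ (g : G) (p : ↥Wt),
        e (Quotient.mk (twSetoid α Wt) (g, p)) = g • (p : S' × X).1) ∧
      (∀ (g₀ g : G) (p : ↥Wt),
        e (Quotient.mk (twSetoid α Wt) (g₀ * g, p)) =
          g₀ • e (Quotient.mk (twSetoid α Wt) (g, p))) ∧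
      (∀ (s' : S') (g : G) (x : X), f' s' = indMk α (g, x) →
        ∃ p : ↥Wt, (p : S' × X) = (g⁻¹ • s', x) ∧
          e.symm s' = Quotient.mk (twSetoid α Wt) (g, p)) :=
  stmt13_general α f' hf' W hW Wt hWt
end
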